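/- Let F be a nonsingular unsatisfiable hitting clause-set admitting a nontrivial clause-factorisation F = (F₀ ∖ {C}) ∪ {C ∪ D : D ∈ G}, and suppose F is not strictly fs-resolvable. Let s = |var(F₀) ∩ var(G)|. If N₀, N₁ ∈ ℕ are such that every nonsingular unsatisfiable hitting clause-set H with δ(H) = δ(F₀) satisfies n(H) ≤ N₀ and every nonsingular unsatisfiable hitting clause-set H with δ(H) = δ(G) satisfies n(H) ≤ N₁, then n(F) ≤ N₀ + N₁ + s + 1. -/

import Mathlib

/-- A clause-set: a finite set of finite sets of integers. -/
abbrev Cls := Finset (Finset ℤ)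

/-- A clause: a finite set of nonzero integers, clash-free. -/
def IsClause (C : Finset ℤ) : Prop := (0 : ℤ) ∉ C ∧ ∀ x ∈ C, -x ∉ C

/-- All members are clauses. -/
def IsClauseSet (F : Cls) : Prop := ∀ C ∈ F, IsClause C

/-- Satisfiability: some clause (partial assignment) meets every clause of `F`. -/
def Sat (F : Cls) : Prop := ∃ S : Finset ℤ, IsClause S ∧ ∀ D ∈ F, (S ∩ D).Nonempty

/-- Hitting: any two distinct clauses clash. -/
def Hitting (F : Cls) : Prop := ∀ C ∈ F, ∀ D ∈ F, C ≠ D → ∃ x ∈ C, -x ∈ D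

/-- Unsatisfiable hitting clause-set. -/
def UHit (F : Cls) : Prop := IsClauseSet F ∧ Hitting F ∧ ¬ Sat F

/-- The variables of a clause-set (as absolute values of its literals). -/
def cvar (F : Cls) : Finset ℤ := F.sup (fun C => C.image (fun x => |x|))

/-- Number of variables. -/
def nvar (F : Cls) : ℕ := (cvar F).card

/-- Deficiency: number of clauses minus number of variables. -/
def deficiency (F : Cls) : ℤ := (F.card : ℤ) - (nvar F : ℤ)

/-- Literal degree. -/
def ldeg (F : Cls) (x : ℤ) : ℕ := (F.filter (fun C => x ∈ C)).card

/-- Variable degree. -/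
def vdeg (F : Cls) (v : ℤ) : ℕ := ldeg F v + ldeg F (-v)

/-- Singular variable. -/
def SingularVar (F : Cls) (v : ℤ) : Prop :=
  v ∈ cvar F ∧ min (ldeg F v) (ldeg F (-v)) = 1

/-- Nonsingular clause-set. -/
def Nonsingular (F : Cls) : Prop := ∀ v, ¬ SingularVar F v

/-- Number of singular variables. -/
def nsv (F : Cls) : ℕ :=
  ((cvar F).filter (fun v => min (ldeg F v) (ldeg F (-v)) = 1)).card

/-- Number of 1-singular variables. -/
def nosv (F : Cls) : ℕ :=
  ((cvar F).filter (fun v => min (ldeg F v) (ldeg F (-v)) = 1 ∧ vdeg F v = 2)).card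

/-- Number of singular, non-1-singular variables. -/
def nnosv (F : Cls) : ℕ :=
  ((cvar F).filter (fun v => min (ldeg F v) (ldeg F (-v)) = 1 ∧ vdeg F v ≠ 2)).card

/-- Full subsumption pair: `{E ∪ {x}, E ∪ {-x}}`. -/
def IsFsPair (P : Cls) : Prop :=
  ∃ (E : Finset ℤ) (x : ℤ), IsClause E ∧ x ≠ 0 ∧ x ∉ E ∧ -x ∉ E ∧
    P = {insert x E, insert (-x) E}

/-- Strict fs-resolvability: an fs-pair whose resolvent is not in `F`, and whose
resolution variable occurs in the rest of `F`. -/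
def StrictlyFsResolvable (F : Cls) : Prop :=
  ∃ (E : Finset ℤ) (x : ℤ), IsClause E ∧ x ≠ 0 ∧ x ∉ E ∧ -x ∉ E ∧
    insert x E ∈ F ∧ insert (-x) E ∈ F ∧ E ∉ F ∧
    |x| ∈ cvar (F \ {insert x E, insert (-x) E})

/-- `F'` is an nfs-flip of `F`: an nfs-pair `{E ∪ {x}, E ∪ {-x,y}} ⊆ F` is replaced
by its flipped pair `{E ∪ {x,-y}, E ∪ {y}}`, which must not intersect `F`. -/
def NfsFlip (F F' : Cls) : Prop :=
  ∃ (E : Finset ℤ) (x y : ℤ), IsClause E ∧ x ≠ 0 ∧ y ≠ 0 ∧ |x| ≠ |y| ∧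
    x ∉ E ∧ -x ∉ E ∧ y ∉ E ∧ -y ∉ E ∧
    insert x E ∈ F ∧ insert y (insert (-x) E) ∈ F ∧
    insert (-y) (insert x E) ∉ F ∧ insert y E ∉ F ∧
    F' = (F \ {insert x E, insert y (insert (-x) E)}) ∪
         {insert (-y) (insert x E), insert y E}

/-- Intersection of all clauses of `F` (for nonempty `F`). -/
def bigInter (F : Cls) : Finset ℤ := (F.sup id).filter (fun x => ∀ C ∈ F, x ∈ C)

/-- Clause-factor: a nonempty `F' ⊆ F` whose residue is unsatisfiable. -/
def ClauseFactor (F F' : Cls) : Prop :=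
  F'.Nonempty ∧ F' ⊆ F ∧ ¬ Sat (F'.image (fun E => E \ bigInter F'))

/-- A clause-factor is trivial if it has one clause, or is unsatisfiable and all of `F`. -/
def TrivialFactor (F F' : Cls) : Prop := F'.card = 1 ∨ (¬ Sat F' ∧ F' = F)

/-- Clause-irreducible: every clause-factor is trivial. -/
def ClauseIrreducible (F : Cls) : Prop := ∀ F', ClauseFactor F F' → TrivialFactor F F'

/-- DP-reduction (variable elimination) on variable `v`. -/
def dp (v : ℤ) (F : Cls) : Cls :=
  ((F ×ˢ F).filter (fun p => p.1 ∩ p.2.image (fun x => -x) = {v})).image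
    (fun p => (p.1 ∪ p.2) \ {v, -v}) ∪
  F.filter (fun C => v ∉ C ∧ -v ∉ C)

/-- `x` (or `-x`) occurs in a clause of `F`. -/
def LitIn (F : Cls) (x : ℤ) : Prop := ∃ C ∈ F, x ∈ C ∨ -x ∈ C

/-- Isomorphism of clause-sets. -/
def Iso (F G : Cls) : Prop :=
  ∃ f : ℤ → ℤ, (∀ x, f (-x) = - f x) ∧
    (∀ x y, LitIn F x → LitIn F y → f x = f y → x = y) ∧
    G = F.image (fun C => C.image f)

/-- The clause-set D3. -/
def D3 : Cls := {({1,2,3} : Finset ℤ), {-1,-2,-3}, {-1,2}, {-2,3}, {-3,1}}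

/-- Logical equivalence of clause-sets. -/
def LogEquiv (F G : Cls) : Prop :=
  ∀ S : Finset ℤ, IsClause S →
    ((∀ D ∈ F, (S ∩ D).Nonempty) ↔ (∀ D ∈ G, (S ∩ D).Nonempty))

/-!
`G` and `F₀` are again unsatisfiable hitting clause-sets and `var F = var F₀ ∪ var G`, so
`n F + s = n F₀ + n G`. A UHIT containing an fs-pair `{E ∪ {x}, E ∪ {-x}}` is strictly
fs-resolvable unless `|x|` is singular, so `F` contains no fs-pair. Hence neither `G` nor `F₀` has a
variable occurring exactly once positively and once negatively (such a variable spans an fs-pair,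
which lifts to `F`), the singular variables of `G` are shared with `F₀`, and a singular variable of
`F₀` is shared with `G` or has a degree-one literal in `C`. Singular DP-reduction on a literal of
degree one whose complement occurs at least twice keeps the clause-set an unsatisfiable hitting one of
the same deficiency and creates no new singular variables; iterating it turns `G` into a nonsingular
UHIT with at least `n G - s` variables. For `F₀`, eliminating one degree-one literal of `C` first
raises every other literal of `C` to degree at least two, after which only shared singular variables
remain, giving a nonsingular UHIT with at least `n F₀ - s - 1` variables.
-/

open Finset

section Basic

variable {F H : Cls} {C D S : Finset ℤ} {x w : ℤ}

lemma IsClause.subset (hC : IsClause C) (hS : S ⊆ C) : IsClause S :=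
  ⟨fun h0 => hC.1 (hS h0), fun x hx hnx => hC.2 x (hS hx) (hS hnx)⟩

lemma IsClause.ne_zero (hC : IsClause C) (hx : x ∈ C) : x ≠ 0 := by
  rintro rfl
  exact hC.1 hx

lemma IsClause.insert (hS : IsClause S) (hx : x ≠ 0) (hnx : -x ∉ S) : IsClause (insert x S) := by
  refine ⟨by simp [Ne.symm hx, hS.1], fun y hy hny => ?_⟩
  simp only [mem_insert] at hy hny
  rcases hy with rfl | hy
  · rcases hny with h | h
    · omega
    · exact hnx h
  · rcases hny with h | h
    · exact hnx (by rwa [← h, neg_neg])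
    · exact hS.2 y hy h

lemma IsClause.image_neg (hC : IsClause C) : IsClause (C.image (- ·)) := by
  refine ⟨by simpa using hC.1, fun x hx hnx => ?_⟩
  simp only [mem_image] at hx hnx
  obtain ⟨a, ha, rfl⟩ := hx
  obtain ⟨b, hb, hba⟩ := hnx
  rw [neg_neg, neg_eq_iff_eq_neg] at hba
  exact hC.2 a ha (hba ▸ hb)

lemma mem_cvar : w ∈ cvar F ↔ ∃ C ∈ F, ∃ x ∈ C, |x| = w := by
  simp only [cvar, mem_sup, mem_image]

lemma abs_mem_cvar (hC : C ∈ F) (hx : x ∈ C) : |x| ∈ cvar F :=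
  mem_cvar.2 ⟨C, hC, x, hx, rfl⟩

lemma cvar_union (F H : Cls) : cvar (F ∪ H) = cvar F ∪ cvar H := sup_union

lemma cvar_insert (C : Finset ℤ) (F : Cls) :
    cvar (insert C F) = C.image (fun x => |x|) ∪ cvar F := sup_insert

lemma cvar_image_union (C : Finset ℤ) (hF : F.Nonempty) :
    cvar (F.image (C ∪ ·)) = C.image (fun x => |x|) ∪ cvar F := by
  simp only [cvar, sup_image, Function.comp_def, image_union]
  exact (sup_sup (f := fun _ => C.image fun x => |x|)).trans (by rw [sup_const hF]; rfl)

lemma two_le_card_of_not_sat (hF : IsClauseSet F) (hu : ¬ Sat F) (hne : F ≠ {∅}) : 2 ≤ #F := by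
  by_contra! h
  rcases Nat.lt_succ_iff.1 h |>.eq_or_lt with h | h
  · obtain ⟨D, rfl⟩ := card_eq_one.1 h
    obtain ⟨d, hd⟩ := nonempty_iff_ne_empty.2 fun h => hne (h ▸ rfl)
    exact hu ⟨{d}, (hF D (mem_singleton_self D)).subset (singleton_subset_iff.2 hd),
      by simpa using ⟨d, mem_inter.2 ⟨mem_singleton_self d, hd⟩⟩⟩
  · rw [Nat.lt_one_iff, card_eq_zero] at h
    exact hu ⟨∅, ⟨by simp, by simp⟩, by simp [h]⟩

lemma ldeg_pos_iff : 0 < ldeg F x ↔ ∃ C ∈ F, x ∈ C := by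
  simp [ldeg, card_pos, Finset.Nonempty]

lemma ldeg_eq_zero_of_abs_notMem (hx : |x| ∉ cvar F) : ldeg F x = 0 :=
  card_eq_zero.2 (filter_eq_empty_iff.2 fun _ hC hxC => hx (abs_mem_cvar hC hxC))

lemma eq_of_ldeg_eq_one (h : ldeg F x = 1) (hC : C ∈ F) (hxC : x ∈ C) (hD : D ∈ F)
    (hxD : x ∈ D) : C = D :=
  card_le_one.1 h.le _ (mem_filter.2 ⟨hC, hxC⟩) _ (mem_filter.2 ⟨hD, hxD⟩)

lemma ldeg_eq_one (hC : C ∈ F) (hxC : x ∈ C) (h : ∀ D ∈ F, x ∈ D → D = C) : ldeg F x = 1 :=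
  card_eq_one.2 ⟨C, eq_singleton_iff_unique_mem.2
    ⟨mem_filter.2 ⟨hC, hxC⟩, fun D hD => h D (mem_filter.1 hD).1 (mem_filter.1 hD).2⟩⟩

lemma ldeg_union (h : Disjoint F H) (x : ℤ) : ldeg (F ∪ H) x = ldeg F x + ldeg H x := by
  simp only [ldeg, filter_union]
  exact card_union_of_disjoint (disjoint_filter_filter h)

lemma ldeg_insert (hC : C ∉ F) (x : ℤ) :
    ldeg (insert C F) x = ldeg F x + if x ∈ C then 1 else 0 := by
  simp only [ldeg, filter_insert]
  split_ifs with hx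
  · exact card_insert_of_notMem fun h => hC (mem_filter.1 h).1
  · rfl

lemma ldeg_image {f : Finset ℤ → Finset ℤ} (hf : Set.InjOn f F) (x : ℤ) :
    ldeg (F.image f) x = #(F.filter fun E => x ∈ f E) := by
  rw [ldeg, filter_image, card_image_of_injOn (hf.mono (coe_subset.2 (filter_subset _ _)))]

lemma min_ldeg_abs (F : Cls) (x : ℤ) :
    min (ldeg F |x|) (ldeg F (-|x|)) = min (ldeg F x) (ldeg F (-x)) := by
  rcases abs_choice x with h | h <;> rw [h]
  rw [neg_neg, min_comm]

lemma min_ldeg_eq_of_abs_eq {y : ℤ} (h : |x| = |y|) :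
    min (ldeg F x) (ldeg F (-x)) = min (ldeg F y) (ldeg F (-y)) := by
  rw [← min_ldeg_abs, h, min_ldeg_abs]

lemma singularVar_abs_iff :
    SingularVar F |x| ↔ |x| ∈ cvar F ∧ min (ldeg F x) (ldeg F (-x)) = 1 := by
  rw [SingularVar, min_ldeg_abs]

end Basic

namespace UHit

variable {H : Cls} {A C₁ C₂ Cv D E S : Finset ℤ} {l v x y : ℤ}

/-- Flip `l` to true in `S`: the result falsifies some clause, and the hitting property forces
that clause to contain `-l`. -/
lemma eq_neg_of_mem_of_falsifies (hU : UHit H) (hA : A ∈ H) (hl : l ∈ A) (hS : IsClause S)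
    (hAS : ∀ z ∈ A, -z ∈ S) (hdeg : ldeg H (-l) = 1) (hE : E ∈ H) (hlE : -l ∈ E)
    (hxE : x ∈ E) (hxS : x ∈ S) : x = -l := by
  by_contra hxl
  set S' := insert l (S.erase (-l))
  have hS' : IsClause S' :=
    (hS.subset (erase_subset _ _)).insert ((hU.1 A hA).ne_zero hl) (notMem_erase _ _)
  have hmem : ∀ z ∈ S, z ≠ -l → z ∈ S' := fun z hz hzl => mem_insert_of_mem (mem_erase.2 ⟨hzl, hz⟩)
  obtain ⟨E', hE', hS'E'⟩ : ∃ E' ∈ H, ¬ (S' ∩ E').Nonempty := by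
    by_contra! h
    exact hU.2.2 ⟨S', hS', h⟩
  have hlE' : -l ∈ E' := by
    have hA' : A ≠ E' := by
      rintro rfl
      exact hS'E' ⟨l, mem_inter.2 ⟨mem_insert_self _ _, hl⟩⟩
    obtain ⟨z, hzA, hzE'⟩ := hU.2.1 A hA E' hE' hA'
    by_contra hlE'
    have hzl : -z ≠ -l := fun h => hlE' (h ▸ hzE')
    exact hS'E' ⟨-z, mem_inter.2 ⟨hmem _ (hAS z hzA) hzl, hzE'⟩⟩
  obtain rfl := eq_of_ldeg_eq_one hdeg hE hlE hE' hlE'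
  exact hS'E' ⟨x, mem_inter.2 ⟨hmem x hxS hxl, hxE⟩⟩

lemma eq_of_mem_of_neg_mem (hU : UHit H) (h1 : ldeg H v = 1) (hCv : Cv ∈ H) (hvCv : v ∈ Cv)
    (hD : D ∈ H) (hvD : -v ∈ D) (hy : y ∈ Cv) (hyD : -y ∈ D) : y = v := by
  have := hU.eq_neg_of_mem_of_falsifies hD hvD (hU.1 D hD).image_neg
    (fun z hz => mem_image_of_mem _ hz) (by rwa [neg_neg]) hCv (by rwa [neg_neg]) hy
    (mem_image.2 ⟨-y, hyD, neg_neg y⟩)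
  rwa [neg_neg] at this

lemma erase_subset_erase_of_ldeg_eq_one (hU : UHit H) (h1 : ldeg H v = 1)
    (h2 : ldeg H (-v) = 1) (hC₁ : C₁ ∈ H) (hv₁ : v ∈ C₁) (hC₂ : C₂ ∈ H) (hv₂ : -v ∈ C₂) :
    C₂.erase (-v) ⊆ C₁.erase v := by
  intro b hb
  obtain ⟨hbv, hbC₂⟩ := mem_erase.1 hb
  have hbv' : b ≠ v := by
    rintro rfl
    exact (hU.1 C₂ hC₂).2 _ hv₂ (by rwa [neg_neg])
  refine mem_erase.2 ⟨hbv', ?_⟩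
  by_contra hbC₁
  have hnbC₁ : -b ∉ C₁ := fun h =>
    hbv (hU.eq_of_mem_of_neg_mem h2 hC₂ hv₂ hC₁ (by rwa [neg_neg]) hbC₂ h)
  have hS : IsClause (insert b (C₁.image (- ·))) :=
    (hU.1 C₁ hC₁).image_neg.insert ((hU.1 C₂ hC₂).ne_zero hbC₂) (by simpa using hbC₁)
  exact hbv (hU.eq_neg_of_mem_of_falsifies hC₁ hv₁ hS
    (fun z hz => mem_insert_of_mem (mem_image_of_mem _ hz)) h2 hC₂ hv₂ hbC₂ (mem_insert_self _ _))

lemma exists_fsPair_of_ldeg_eq_one (hU : UHit H) (h1 : ldeg H v = 1) (h2 : ldeg H (-v) = 1) :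
    ∃ E, v ∉ E ∧ -v ∉ E ∧ insert v E ∈ H ∧ insert (-v) E ∈ H := by
  obtain ⟨C₁, hC₁, hv₁⟩ := ldeg_pos_iff.1 (h1 ▸ Nat.one_pos)
  obtain ⟨C₂, hC₂, hv₂⟩ := ldeg_pos_iff.1 (h2 ▸ Nat.one_pos)
  have hsub := hU.erase_subset_erase_of_ldeg_eq_one (v := -v) h2 (by rwa [neg_neg]) hC₂ hv₂ hC₁
    (by rwa [neg_neg])
  rw [neg_neg] at hsub
  have heq : C₁.erase v = C₂.erase (-v) :=
    hsub.antisymm (hU.erase_subset_erase_of_ldeg_eq_one h1 h2 hC₁ hv₁ hC₂ hv₂)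
  refine ⟨C₁.erase v, notMem_erase _ _, fun h => (hU.1 C₁ hC₁).2 v hv₁ (mem_of_mem_erase h), ?_, ?_⟩
  · rwa [insert_erase hv₁]
  · rwa [heq, insert_erase hv₂]

end UHit

section Singular

variable {F : Cls} {E : Finset ℤ} {w x : ℤ}

lemma Nonsingular.min_ldeg_ne_one (hns : Nonsingular F) (hx : |x| ∈ cvar F) :
    min (ldeg F x) (ldeg F (-x)) ≠ 1 :=
  fun h => hns |x| (singularVar_abs_iff.2 ⟨hx, h⟩)

/-- If `insert (-x) E ∈ F` as well, then `|x|` occurs only in this fs-pair (as `F` is not strictly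
fs-resolvable), so it is singular. -/
lemma UHit.insert_neg_notMem (hU : UHit F) (hns : Nonsingular F)
    (hnfs : ¬ StrictlyFsResolvable F) (hx : x ∉ E) (hnx : -x ∉ E) (hxE : insert x E ∈ F) :
    insert (-x) E ∉ F := by
  intro hnxE
  have hcl : IsClause (insert x E) := hU.1 _ hxE
  have hE : IsClause E := hcl.subset (subset_insert _ _)
  have hx0 : x ≠ 0 := hcl.ne_zero (mem_insert_self _ _)
  have hEF : E ∉ F := by
    intro hEF
    obtain ⟨y, hyE, hy⟩ := hU.2.1 E hEF _ hxE (fun h => hx (h ▸ mem_insert_self _ _))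
    rcases mem_insert.1 hy with h | h
    · exact hnx (by rwa [← h, neg_neg])
    · exact hE.2 y hyE h
  have honly : ∀ D ∈ F, (x ∈ D ∨ -x ∈ D) → D = insert x E ∨ D = insert (-x) E := by
    intro D hD hxD
    by_contra! hne
    refine hnfs ⟨E, x, hE, hx0, hx, hnx, hxE, hnxE, hEF, mem_cvar.2 ⟨D, ?_, ?_⟩⟩
    · simpa [hD] using hne
    · rcases hxD with h | h
      exacts [⟨x, h, rfl⟩, ⟨-x, h, abs_neg x⟩]
  have h1 : ldeg F x = 1 := ldeg_eq_one hxE (mem_insert_self _ _) fun D hD hxD => by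
    refine (honly D hD (Or.inl hxD)).resolve_right ?_
    rintro rfl
    rcases mem_insert.1 hxD with h | h
    exacts [hx0 (by omega), hx h]
  have h2 : ldeg F (-x) = 1 := ldeg_eq_one hnxE (mem_insert_self _ _) fun D hD hxD => by
    refine (honly D hD (Or.inr hxD)).resolve_left ?_
    rintro rfl
    rcases mem_insert.1 hxD with h | h
    exacts [hx0 (by omega), hnx h]
  exact hns.min_ldeg_ne_one (abs_mem_cvar hxE (mem_insert_self _ _)) (by rw [h1, h2]; rfl)

def singularVars (F : Cls) : Finset ℤ :=
  (cvar F).filter fun v => min (ldeg F v) (ldeg F (-v)) = 1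

lemma mem_singularVars : w ∈ singularVars F ↔ SingularVar F w := mem_filter

lemma singularVars_eq_empty_iff : singularVars F = ∅ ↔ Nonsingular F := by
  simp [eq_empty_iff_forall_notMem, mem_singularVars, Nonsingular]

lemma abs_mem_singularVars_iff :
    |x| ∈ singularVars F ↔ |x| ∈ cvar F ∧ min (ldeg F x) (ldeg F (-x)) = 1 := by
  rw [mem_singularVars, singularVar_abs_iff]

def OneSingularFree (F : Cls) : Prop := ∀ w, ldeg F w = 1 → ldeg F (-w) ≠ 1

lemma OneSingularFree.exists_ldeg_eq_one (hF : OneSingularFree F) (hw : w ∈ singularVars F) :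
    ∃ y, |y| = w ∧ ldeg F y = 1 ∧ 2 ≤ ldeg F (-y) := by
  obtain ⟨hwF, hmin⟩ := mem_singularVars.1 hw
  obtain ⟨C, -, z, -, rfl⟩ := mem_cvar.1 hwF
  rcases Nat.le_total (ldeg F |z|) (ldeg F (-|z|)) with hle | hle
  · have := hF |z|
    exact ⟨|z|, abs_abs z, by omega⟩
  · have := hF (-|z|)
    rw [neg_neg] at this
    exact ⟨-|z|, by rw [abs_neg, abs_abs], by rw [neg_neg]; omega⟩

end Singular

def singularResolvent (v : ℤ) (Cv E : Finset ℤ) : Finset ℤ :=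
  (E ∪ if -v ∈ E then Cv else ∅) \ {v, -v}

/-- When `Cv` is the only clause of `H` containing `v`, this is DP-reduction of `H` on `|v|`. -/
def singularDP (v : ℤ) (Cv : Finset ℤ) (H : Cls) : Cls :=
  (H.erase Cv).image (singularResolvent v Cv)

section SingularDP

variable {H : Cls} {v x z : ℤ} {Cv E E' : Finset ℤ}

lemma mem_singularResolvent :
    x ∈ singularResolvent v Cv E ↔ (x ∈ E ∨ -v ∈ E ∧ x ∈ Cv) ∧ x ≠ v ∧ x ≠ -v := by
  by_cases h : -v ∈ E <;> simp [singularResolvent, h]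

lemma singularResolvent_subset (h : -v ∉ E) : singularResolvent v Cv E ⊆ E := fun x hx => by
  simpa [h] using (mem_singularResolvent.1 hx).1

lemma notMem_of_mem_erase_of_ldeg_eq_one (hCv : Cv ∈ H) (hvCv : v ∈ Cv) (h1 : ldeg H v = 1)
    (hE : E ∈ H.erase Cv) : v ∉ E := fun hvE =>
  (mem_erase.1 hE).1 (eq_of_ldeg_eq_one h1 (mem_of_mem_erase hE) hvE hCv hvCv)

lemma UHit.isClause_singularResolvent (hU : UHit H) (hCv : Cv ∈ H) (hvCv : v ∈ Cv)
    (h1 : ldeg H v = 1) (hE : E ∈ H) : IsClause (singularResolvent v Cv E) := by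
  by_cases hvE : -v ∈ E
  swap
  · exact (hU.1 E hE).subset (singularResolvent_subset hvE)
  have hA : ∀ y ∈ Cv, -y ∈ E → y = v := fun y hy hyE =>
    hU.eq_of_mem_of_neg_mem h1 hCv hvCv hE hvE hy hyE
  have hmem : ∀ y, y ∈ singularResolvent v Cv E ↔ (y ∈ E ∨ y ∈ Cv) ∧ y ≠ v ∧ y ≠ -v := by
    simp [mem_singularResolvent, hvE]
  refine ⟨fun h => ?_, fun y hy hny => ?_⟩
  · rcases ((hmem 0).1 h).1 with h | h
    exacts [(hU.1 E hE).1 h, (hU.1 Cv hCv).1 h]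
  obtain ⟨hy | hy, hyv, hyv'⟩ := (hmem y).1 hy <;> obtain ⟨hny | hny, -⟩ := (hmem (-y)).1 hny
  · exact (hU.1 E hE).2 y hy hny
  · exact hyv' (by linarith [hA (-y) hny (by rwa [neg_neg])])
  · exact hyv (hA y hy hny)
  · exact (hU.1 Cv hCv).2 y hy hny

lemma UHit.exists_clash_singularResolvent (hU : UHit H) (hCv : Cv ∈ H) (hvCv : v ∈ Cv)
    (h1 : ldeg H v = 1) (hE : E ∈ H.erase Cv) (hE' : E' ∈ H.erase Cv) (hne : E ≠ E') :
    ∃ x ∈ singularResolvent v Cv E, -x ∈ singularResolvent v Cv E' := by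
  have hvE := notMem_of_mem_erase_of_ldeg_eq_one hCv hvCv h1 hE
  have hvE' := notMem_of_mem_erase_of_ldeg_eq_one hCv hvCv h1 hE'
  obtain ⟨x, hx, hnx⟩ := hU.2.1 E (mem_of_mem_erase hE) E' (mem_of_mem_erase hE') hne
  have hxv : x ≠ v := by rintro rfl; exact hvE hx
  have hxv' : x ≠ -v := by rintro rfl; exact hvE' (by rwa [neg_neg] at hnx)
  exact ⟨x, mem_singularResolvent.2 ⟨Or.inl hx, hxv, hxv'⟩,
    mem_singularResolvent.2 ⟨Or.inl hnx, by omega, by omega⟩⟩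

lemma UHit.injOn_singularResolvent (hU : UHit H) (hCv : Cv ∈ H) (hvCv : v ∈ Cv)
    (h1 : ldeg H v = 1) : Set.InjOn (singularResolvent v Cv) (H.erase Cv) := by
  intro E hE E' hE' heq
  by_contra hne
  obtain ⟨x, hx, hnx⟩ := hU.exists_clash_singularResolvent hCv hvCv h1 hE hE' hne
  rw [← heq] at hnx
  exact (hU.isClause_singularResolvent hCv hvCv h1 (mem_of_mem_erase hE)).2 x hx hnx

lemma sat_of_sat_singularDP (hvCv : v ∈ Cv) (hv : v ≠ 0)
    (hsat : Sat (singularDP v Cv H)) : Sat H := by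
  obtain ⟨S, hS, hSat⟩ := hsat
  set S₀ := S \ {v, -v}
  have hS₀ : IsClause S₀ := hS.subset sdiff_subset
  have hvS₀ : v ∉ S₀ := by simp [S₀]
  have hnvS₀ : -v ∉ S₀ := by simp [S₀]
  have hSat₀ : ∀ E ∈ H.erase Cv, ∃ x ∈ S₀, x ∈ singularResolvent v Cv E := by
    intro E hE
    obtain ⟨x, hx⟩ := hSat _ (mem_image_of_mem _ hE)
    obtain ⟨hxS, hxE⟩ := mem_inter.1 hx
    obtain ⟨-, hxv, hxv'⟩ := mem_singularResolvent.1 hxE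
    exact ⟨x, by simp [S₀, hxS, hxv, hxv'], hxE⟩
  by_cases hmeet : ∃ x ∈ S₀, x ∈ Cv
  · refine ⟨insert (-v) S₀, hS₀.insert (neg_ne_zero.2 hv) (by rwa [neg_neg]), fun E hE => ?_⟩
    by_cases hEC : E = Cv
    · obtain ⟨x, hxS, hxC⟩ := hmeet
      exact ⟨x, mem_inter.2 ⟨mem_insert_of_mem hxS, hEC ▸ hxC⟩⟩
    by_cases hvE : -v ∈ E
    · exact ⟨-v, mem_inter.2 ⟨mem_insert_self _ _, hvE⟩⟩
    obtain ⟨x, hxS, hxE⟩ := hSat₀ E (mem_erase.2 ⟨hEC, hE⟩)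
    exact ⟨x, mem_inter.2 ⟨mem_insert_of_mem hxS, singularResolvent_subset hvE hxE⟩⟩
  · refine ⟨insert v S₀, hS₀.insert hv hnvS₀, fun E hE => ?_⟩
    by_cases hEC : E = Cv
    · exact ⟨v, mem_inter.2 ⟨mem_insert_self _ _, hEC ▸ hvCv⟩⟩
    obtain ⟨x, hxS, hxE⟩ := hSat₀ E (mem_erase.2 ⟨hEC, hE⟩)
    have hxE' : x ∈ E :=
      (mem_singularResolvent.1 hxE).1.resolve_right fun h => hmeet ⟨x, hxS, h.2⟩
    exact ⟨x, mem_inter.2 ⟨mem_insert_of_mem hxS, hxE'⟩⟩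

lemma uHit_singularDP (hU : UHit H) (hCv : Cv ∈ H) (hvCv : v ∈ Cv) (h1 : ldeg H v = 1) :
    UHit (singularDP v Cv H) := by
  refine ⟨?_, ?_, fun hsat => hU.2.2 (sat_of_sat_singularDP hvCv ((hU.1 Cv hCv).ne_zero hvCv) hsat)⟩
  · simp only [IsClauseSet, singularDP, forall_mem_image]
    exact fun E hE => hU.isClause_singularResolvent hCv hvCv h1 (mem_of_mem_erase hE)
  · simp only [Hitting, singularDP, forall_mem_image]
    exact fun E hE E' hE' hne => hU.exists_clash_singularResolvent hCv hvCv h1 hE hE'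
      fun h => hne (congrArg _ h)

lemma UHit.card_singularDP (hU : UHit H) (hCv : Cv ∈ H) (hvCv : v ∈ Cv) (h1 : ldeg H v = 1) :
    #(singularDP v Cv H) + 1 = #H := by
  rw [singularDP, card_image_of_injOn (hU.injOn_singularResolvent hCv hvCv h1),
    card_erase_add_one hCv]

lemma mem_of_mem_singularDP (hCv : Cv ∈ H) (hE' : E' ∈ singularDP v Cv H) (hx : x ∈ E') :
    (∃ E ∈ H, x ∈ E) ∧ x ≠ v ∧ x ≠ -v := by
  obtain ⟨E, hE, rfl⟩ := mem_image.1 hE'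
  obtain ⟨hx | hx, hxv⟩ := mem_singularResolvent.1 hx
  exacts [⟨⟨E, mem_of_mem_erase hE, hx⟩, hxv⟩, ⟨⟨Cv, hCv, hx.2⟩, hxv⟩]

lemma UHit.cvar_singularDP (hU : UHit H) (hCv : Cv ∈ H) (hvCv : v ∈ Cv)
    (h2 : 0 < ldeg H (-v)) : cvar (singularDP v Cv H) = (cvar H).erase |v| := by
  ext w
  simp only [mem_erase, mem_cvar]
  constructor
  · rintro ⟨E', hE', x, hx, rfl⟩
    obtain ⟨⟨E, hE, hxE⟩, hxv, hxv'⟩ := mem_of_mem_singularDP hCv hE' hx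
    exact ⟨fun h => (abs_eq_abs.1 h).elim hxv hxv', E, hE, x, hxE, rfl⟩
  · rintro ⟨hw, E, hE, x, hxE, rfl⟩
    have hxv : x ≠ v ∧ x ≠ -v := ⟨fun h => hw (h ▸ rfl), fun h => hw (h ▸ abs_neg v)⟩
    obtain ⟨D, hD, hvD⟩ := ldeg_pos_iff.1 h2
    have hDCv : D ≠ Cv := fun h => (hU.1 Cv hCv).2 v hvCv (h ▸ hvD)
    by_cases hEC : E = Cv
    · exact ⟨_, mem_image_of_mem _ (mem_erase.2 ⟨hDCv, hD⟩), x,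
        mem_singularResolvent.2 ⟨Or.inr ⟨hvD, hEC ▸ hxE⟩, hxv⟩, rfl⟩
    · exact ⟨_, mem_image_of_mem _ (mem_erase.2 ⟨hEC, hE⟩), x,
        mem_singularResolvent.2 ⟨Or.inl hxE, hxv⟩, rfl⟩

lemma UHit.nvar_singularDP (hU : UHit H) (hCv : Cv ∈ H) (hvCv : v ∈ Cv)
    (h2 : 0 < ldeg H (-v)) : nvar (singularDP v Cv H) + 1 = nvar H := by
  rw [nvar, nvar, hU.cvar_singularDP hCv hvCv h2, card_erase_add_one (abs_mem_cvar hCv hvCv)]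

lemma UHit.deficiency_singularDP (hU : UHit H) (hCv : Cv ∈ H) (hvCv : v ∈ Cv)
    (h1 : ldeg H v = 1) (h2 : 0 < ldeg H (-v)) :
    deficiency (singularDP v Cv H) = deficiency H := by
  have hc := hU.card_singularDP hCv hvCv h1
  have hn := hU.nvar_singularDP hCv hvCv h2
  simp only [deficiency]
  omega

lemma UHit.ldeg_singularDP_of_notMem (hU : UHit H) (hCv : Cv ∈ H) (hvCv : v ∈ Cv)
    (h1 : ldeg H v = 1) (hxv : x ≠ v) (hxv' : x ≠ -v) (hxCv : x ∉ Cv) :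
    ldeg (singularDP v Cv H) x = ldeg H x := by
  rw [singularDP, ldeg_image (hU.injOn_singularResolvent hCv hvCv h1), ldeg,
    filter_congr (q := (x ∈ ·)) fun E _ => by simp [mem_singularResolvent, hxv, hxv', hxCv],
    filter_erase, erase_eq_of_notMem (by simp [hxCv])]

lemma UHit.ldeg_neg_le_ldeg_singularDP (hU : UHit H) (hCv : Cv ∈ H) (hvCv : v ∈ Cv)
    (h1 : ldeg H v = 1) (hxCv : x ∈ Cv) (hxv : x ≠ v) :
    ldeg H (-v) ≤ ldeg (singularDP v Cv H) x := by
  have hnv : -v ∉ Cv := (hU.1 Cv hCv).2 v hvCv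
  rw [singularDP, ldeg_image (hU.injOn_singularResolvent hCv hvCv h1)]
  refine card_le_card fun E hE => ?_
  obtain ⟨hE, hvE⟩ := mem_filter.1 hE
  refine mem_filter.2 ⟨mem_erase.2 ⟨fun h => hnv (h ▸ hvE), hE⟩, ?_⟩
  exact mem_singularResolvent.2 ⟨Or.inr ⟨hvE, hxCv⟩, hxv, fun h => hnv (h ▸ hxCv)⟩

lemma UHit.ldeg_singularDP_of_le_one (hU : UHit H) (hCv : Cv ∈ H) (hvCv : v ∈ Cv)
    (h1 : ldeg H v = 1) (h2 : 2 ≤ ldeg H (-v)) (hxv : x ≠ v) (hxv' : x ≠ -v)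
    (hle : ldeg (singularDP v Cv H) x ≤ 1) : ldeg (singularDP v Cv H) x = ldeg H x :=
  hU.ldeg_singularDP_of_notMem hCv hvCv h1 hxv hxv' fun hxCv => by
    have := hU.ldeg_neg_le_ldeg_singularDP hCv hvCv h1 hxCv hxv
    omega

lemma ldeg_pos_of_ldeg_singularDP_pos (hCv : Cv ∈ H) (h : 0 < ldeg (singularDP v Cv H) x) :
    0 < ldeg H x := by
  obtain ⟨E', hE', hx⟩ := ldeg_pos_iff.1 h
  exact ldeg_pos_iff.2 (mem_of_mem_singularDP hCv hE' hx).1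

lemma UHit.singularVars_singularDP_subset (hU : UHit H) (hCv : Cv ∈ H) (hvCv : v ∈ Cv)
    (h1 : ldeg H v = 1) (h2 : 2 ≤ ldeg H (-v)) :
    singularVars (singularDP v Cv H) ⊆ (singularVars H).erase |v| := by
  intro u hu
  obtain ⟨hu', hmin⟩ := mem_singularVars.1 hu
  obtain ⟨E', hE', x, hx, rfl⟩ := mem_cvar.1 hu'
  obtain ⟨-, hxv, hxv'⟩ := mem_of_mem_singularDP hCv hE' hx
  rw [hU.cvar_singularDP hCv hvCv (by omega), mem_erase] at hu'
  rw [min_ldeg_abs] at hmin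
  have e₁ := hU.ldeg_singularDP_of_le_one hCv hvCv h1 h2 hxv hxv'
  have e₂ := hU.ldeg_singularDP_of_le_one (x := -x) hCv hvCv h1 h2 (by omega) (by omega)
  have p₁ := ldeg_pos_of_ldeg_singularDP_pos (x := x) (v := v) hCv
  have p₂ := ldeg_pos_of_ldeg_singularDP_pos (x := -x) (v := v) hCv
  refine mem_erase.2 ⟨hu'.1, abs_mem_singularVars_iff.2 ⟨hu'.2, ?_⟩⟩
  omega

lemma OneSingularFree.singularDP (hH : OneSingularFree H) (hU : UHit H) (hCv : Cv ∈ H)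
    (hvCv : v ∈ Cv) (h1 : ldeg H v = 1) (h2 : 2 ≤ ldeg H (-v)) :
    OneSingularFree (singularDP v Cv H) := by
  intro w hw₁ hw₂
  obtain ⟨E', hE', hw⟩ := ldeg_pos_iff.1 (hw₁ ▸ Nat.one_pos)
  obtain ⟨-, hwv, hwv'⟩ := mem_of_mem_singularDP hCv hE' hw
  refine hH w ?_ ?_
  · rwa [← hU.ldeg_singularDP_of_le_one hCv hvCv h1 h2 hwv hwv' hw₁.le]
  · rwa [← hU.ldeg_singularDP_of_le_one hCv hvCv h1 h2 (by omega) (by omega) hw₂.le]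

lemma UHit.abs_notMem_singularVars_singularDP (hU : UHit H) (hCv : Cv ∈ H) (hvCv : v ∈ Cv)
    (h1 : ldeg H v = 1) (h2 : 2 ≤ ldeg H (-v)) (hz : z ∈ Cv) (hzv : z ≠ v)
    (hz2 : 2 ≤ ldeg H (-z)) : |z| ∉ singularVars (singularDP v Cv H) := by
  have hcl := hU.1 Cv hCv
  have hzv' : z ≠ -v := fun h => hcl.2 v hvCv (h ▸ hz)
  have e₁ := hU.ldeg_neg_le_ldeg_singularDP hCv hvCv h1 hz hzv
  have e₂ := hU.ldeg_singularDP_of_notMem hCv hvCv h1 (x := -z) (by omega) (by omega) (hcl.2 z hz)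
  rw [abs_mem_singularVars_iff]
  omega

end SingularDP

lemma UHit.exists_nonsingular_of_oneSingularFree {H : Cls} (hU : UHit H) (hH : OneSingularFree H) :
    ∃ K, UHit K ∧ Nonsingular K ∧ deficiency K = deficiency H ∧
      nvar H ≤ nvar K + #(singularVars H) := by
  induction hn : #(singularVars H) using Nat.strong_induction_on generalizing H with
  | _ n ih =>
  rcases (singularVars H).eq_empty_or_nonempty with h | ⟨w, hw⟩
  · exact ⟨H, hU, singularVars_eq_empty_iff.1 h, rfl, by omega⟩
  obtain ⟨y, rfl, hy₁, hy₂⟩ := hH.exists_ldeg_eq_one hw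
  obtain ⟨Cy, hCy, hyCy⟩ := ldeg_pos_iff.1 (hy₁ ▸ Nat.one_pos)
  have hlt : #(singularVars (singularDP y Cy H)) < n := hn ▸
    (card_le_card (hU.singularVars_singularDP_subset hCy hyCy hy₁ hy₂)).trans_lt
      (card_erase_lt_of_mem hw)
  obtain ⟨K, hK, hKns, hKd, hKn⟩ := ih _ hlt (uHit_singularDP hU hCy hyCy hy₁)
    (hH.singularDP hU hCy hyCy hy₁ hy₂) rfl
  have := hU.nvar_singularDP hCy hyCy (by omega)
  exact ⟨K, hK, hKns, hKd.trans (hU.deficiency_singularDP hCy hyCy hy₁ (by omega)), by omega⟩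

structure IsClauseFactorisation (F F₀ G : Cls) (C : Finset ℤ) : Prop where
  mem_left : C ∈ F₀
  unsat_right : ¬ Sat G
  disjoint_var : Disjoint (C.image fun x => |x|) (cvar G)
  disjoint : (F₀ \ {C}) ∩ G.image (fun D => C ∪ D) = ∅
  eq : F = (F₀ \ {C}) ∪ G.image (fun D => C ∪ D)

namespace IsClauseFactorisation

variable {F F₀ G : Cls} {C D E : Finset ℤ} {w x : ℤ}

lemma abs_notMem_cvar_right (hfac : IsClauseFactorisation F F₀ G C) (hx : x ∈ C) :
    |x| ∉ cvar G :=
  disjoint_left.1 hfac.disjoint_var (mem_image_of_mem _ hx)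

lemma notMem_of_mem_right (hfac : IsClauseFactorisation F F₀ G C) (hD : D ∈ G) (hx : x ∈ D) :
    x ∉ C ∧ -x ∉ C :=
  ⟨fun h => hfac.abs_notMem_cvar_right h (abs_mem_cvar hD hx),
    fun h => hfac.abs_notMem_cvar_right h (by rw [abs_neg]; exact abs_mem_cvar hD hx)⟩

lemma mem_of_mem_left (hfac : IsClauseFactorisation F F₀ G C) (hE : E ∈ F₀) (hEC : E ≠ C) :
    E ∈ F := by
  rw [hfac.eq]
  exact mem_union_left _ (mem_sdiff.2 ⟨hE, by simpa using hEC⟩)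

lemma union_mem (hfac : IsClauseFactorisation F F₀ G C) (hD : D ∈ G) : C ∪ D ∈ F := by
  rw [hfac.eq]
  exact mem_union_right _ (mem_image_of_mem _ hD)

lemma union_ne (hfac : IsClauseFactorisation F F₀ G C) (hE : E ∈ F₀) (hEC : E ≠ C)
    (hD : D ∈ G) : C ∪ D ≠ E := by
  rintro rfl
  have := hfac.disjoint ▸ mem_inter.2 ⟨mem_sdiff.2 ⟨hE, by simpa using hEC⟩, mem_image_of_mem _ hD⟩
  simp at this

lemma injOn_union (hfac : IsClauseFactorisation F F₀ G C) : Set.InjOn (C ∪ ·) G := by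
  intro D₁ hD₁ D₂ hD₂ h
  have key : ∀ {D D'}, D ∈ G → C ∪ D = C ∪ D' → D ⊆ D' := fun hD h x hx =>
    ((mem_union.1 (h ▸ mem_union_right C hx)).resolve_left (hfac.notMem_of_mem_right hD hx).1)
  exact (key hD₁ h).antisymm (key hD₂ h.symm)

lemma nonempty_right (hfac : IsClauseFactorisation F F₀ G C) : G.Nonempty := by
  by_contra! h
  exact hfac.unsat_right ⟨∅, ⟨by simp, by simp⟩, by simp [h]⟩

lemma isClause (hfac : IsClauseFactorisation F F₀ G C) (hU : UHit F) : IsClause C :=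
  have ⟨_, hD⟩ := hfac.nonempty_right
  (hU.1 _ (hfac.union_mem hD)).subset subset_union_left

lemma uHit_right (hfac : IsClauseFactorisation F F₀ G C) (hU : UHit F) : UHit G := by
  refine ⟨fun D hD => (hU.1 _ (hfac.union_mem hD)).subset subset_union_right,
    fun D₁ hD₁ D₂ hD₂ hne => ?_, hfac.unsat_right⟩
  have hC := hfac.isClause hU
  obtain ⟨x, hx₁, hx₂⟩ := hU.2.1 _ (hfac.union_mem hD₁) _ (hfac.union_mem hD₂)
    fun h => hne (hfac.injOn_union hD₁ hD₂ h)
  rcases mem_union.1 hx₁ with hx₁ | hx₁ <;> rcases mem_union.1 hx₂ with hx₂ | hx₂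
  · exact absurd hx₂ (hC.2 x hx₁)
  · exact absurd (by rwa [neg_neg]) (hfac.notMem_of_mem_right hD₂ hx₂).2
  · exact absurd hx₂ (hfac.notMem_of_mem_right hD₁ hx₁).2
  · exact ⟨x, hx₁, hx₂⟩

/-- Every clause of `F₀` other than `C` clashes with `C`: otherwise the complement of that
clause would satisfy `G`. -/
lemma exists_clash_left (hfac : IsClauseFactorisation F F₀ G C) (hU : UHit F) (hE : E ∈ F₀)
    (hEC : E ≠ C) : ∃ x ∈ C, -x ∈ E := by
  by_contra! h
  have hEF := hfac.mem_of_mem_left hE hEC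
  refine hfac.unsat_right ⟨E.image (- ·), (hU.1 E hEF).image_neg, fun D hD => ?_⟩
  obtain ⟨x, hx, hnx⟩ := hU.2.1 _ (hfac.union_mem hD) E hEF (hfac.union_ne hE hEC hD)
  rcases mem_union.1 hx with hx | hx
  · exact absurd hnx (h x hx)
  · exact ⟨x, mem_inter.2 ⟨mem_image.2 ⟨-x, hnx, neg_neg x⟩, hx⟩⟩

lemma uHit_left (hfac : IsClauseFactorisation F F₀ G C) (hU : UHit F) : UHit F₀ := by
  refine ⟨fun E hE => ?_, fun A hA B hB hne => ?_, fun ⟨S, hS, hSat⟩ => hU.2.2 ⟨S, hS, fun E hE => ?_⟩⟩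
  · by_cases hEC : E = C
    exacts [hEC ▸ hfac.isClause hU, hU.1 E (hfac.mem_of_mem_left hE hEC)]
  · by_cases hAC : A = C
    · exact hAC ▸ hfac.exists_clash_left hU hB (hAC ▸ hne).symm
    by_cases hBC : B = C
    · obtain ⟨x, hx, hnx⟩ := hfac.exists_clash_left hU hA hAC
      exact ⟨-x, hnx, by rwa [neg_neg, hBC]⟩
    exact hU.2.1 A (hfac.mem_of_mem_left hA hAC) B (hfac.mem_of_mem_left hB hBC) hne
  · rw [hfac.eq] at hE
    rcases mem_union.1 hE with hE | hE
    · exact hSat E (mem_sdiff.1 hE).1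
    · obtain ⟨D, -, rfl⟩ := mem_image.1 hE
      exact (hSat C hfac.mem_left).mono (inter_subset_inter_left subset_union_left)

lemma eq_erase (hfac : IsClauseFactorisation F F₀ G C) :
    F = F₀.erase C ∪ G.image (C ∪ ·) := by
  rw [hfac.eq, sdiff_singleton_eq_erase]

lemma cvar_eq (hfac : IsClauseFactorisation F F₀ G C) : cvar F = cvar F₀ ∪ cvar G := by
  rw [hfac.eq_erase, cvar_union, cvar_image_union C hfac.nonempty_right,
    ← insert_erase hfac.mem_left, cvar_insert, erase_insert (notMem_erase _ _)]
  ext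
  simp only [mem_union]
  tauto

lemma ldeg_eq (hfac : IsClauseFactorisation F F₀ G C) (x : ℤ) :
    ldeg F x = ldeg (F₀.erase C) x + #(G.filter fun D => x ∈ C ∪ D) := by
  have hdisj : Disjoint (F₀.erase C) (G.image (C ∪ ·)) := by
    rw [← sdiff_singleton_eq_erase]
    exact disjoint_iff_inter_eq_empty.2 hfac.disjoint
  rw [hfac.eq_erase, ldeg_union hdisj, ldeg_image hfac.injOn_union]

lemma ldeg_left_eq (hfac : IsClauseFactorisation F F₀ G C) (x : ℤ) :
    ldeg F₀ x = ldeg (F₀.erase C) x + if x ∈ C then 1 else 0 := by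
  conv_lhs => rw [← insert_erase hfac.mem_left, ldeg_insert (notMem_erase _ _)]

lemma ldeg_of_mem (hfac : IsClauseFactorisation F F₀ G C) (hx : x ∈ C) :
    ldeg F x + 1 = ldeg F₀ x + #G := by
  rw [hfac.ldeg_eq, hfac.ldeg_left_eq, if_pos hx,
    filter_true_of_mem fun D _ => mem_union_left _ hx]
  ring

lemma ldeg_of_notMem (hfac : IsClauseFactorisation F F₀ G C) (hx : x ∉ C) :
    ldeg F x = ldeg F₀ x + ldeg G x := by
  rw [hfac.ldeg_eq, hfac.ldeg_left_eq, if_neg hx, add_zero]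
  congr 1
  exact congrArg card (filter_congr fun D _ => by simp [hx])

lemma singularVars_right_subset (hfac : IsClauseFactorisation F F₀ G C) (hns : Nonsingular F) :
    singularVars G ⊆ cvar F₀ ∩ cvar G := by
  intro w hw
  obtain ⟨hwG, hmin⟩ := mem_singularVars.1 hw
  refine mem_inter.2 ⟨?_, hwG⟩
  by_contra hwF₀
  obtain ⟨D, hD, z, hz, rfl⟩ := mem_cvar.1 hwG
  obtain ⟨hzC, hnzC⟩ := hfac.notMem_of_mem_right hD hz
  have h₀ : ldeg F₀ z = 0 := ldeg_eq_zero_of_abs_notMem hwF₀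
  have h₀' : ldeg F₀ (-z) = 0 := ldeg_eq_zero_of_abs_notMem (by rwa [abs_neg])
  rw [min_ldeg_abs] at hmin
  refine hns.min_ldeg_ne_one (hfac.cvar_eq ▸ mem_union_right _ hwG) ?_
  rw [hfac.ldeg_of_notMem hzC, hfac.ldeg_of_notMem hnzC]
  omega

/-- Outside `C` and `var G`, degrees in `F` and `F₀` agree. -/
lemma exists_ldeg_eq_one_of_mem_singularVars_left (hfac : IsClauseFactorisation F F₀ G C)
    (hU : UHit F) (hns : Nonsingular F) (hG : 2 ≤ #G) (hw : w ∈ singularVars F₀)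
    (hwG : w ∉ cvar G) : ∃ y ∈ C, |y| = w ∧ ldeg F₀ y = 1 ∧ 2 ≤ ldeg F₀ (-y) := by
  obtain ⟨hwF₀, hmin⟩ := mem_singularVars.1 hw
  obtain ⟨E, -, z, -, rfl⟩ := mem_cvar.1 hwF₀
  rw [min_ldeg_abs] at hmin
  have hwF : |z| ∈ cvar F := hfac.cvar_eq ▸ mem_union_left _ hwF₀
  have hG₀ : ∀ y, |y| = |z| → ldeg G y = 0 := fun y hy => ldeg_eq_zero_of_abs_notMem (hy ▸ hwG)
  have key : ∀ y ∈ C, |y| = |z| → ldeg F₀ y = 1 ∧ 2 ≤ ldeg F₀ (-y) := by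
    intro y hyC hy
    have e₁ := hfac.ldeg_of_mem hyC
    have e₂ := hfac.ldeg_of_notMem ((hfac.isClause hU).2 y hyC)
    have e₃ := hG₀ (-y) (by rw [abs_neg, hy])
    have hpos : 0 < ldeg F₀ y := ldeg_pos_iff.2 ⟨C, hfac.mem_left, hyC⟩
    have hF := hns.min_ldeg_ne_one (x := y) (by rwa [hy])
    rw [← min_ldeg_eq_of_abs_eq hy] at hmin
    omega
  by_cases hzC : z ∈ C
  · exact ⟨z, hzC, rfl, key z hzC rfl⟩
  by_cases hnzC : -z ∈ C
  · exact ⟨-z, hnzC, abs_neg z, key (-z) hnzC (abs_neg z)⟩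
  refine absurd ?_ (hns.min_ldeg_ne_one hwF)
  rw [hfac.ldeg_of_notMem hzC, hfac.ldeg_of_notMem hnzC, hG₀ z rfl, hG₀ (-z) (abs_neg z)]
  exact hmin

lemma oneSingularFree_right (hfac : IsClauseFactorisation F F₀ G C) (hU : UHit F)
    (hns : Nonsingular F) (hnfs : ¬ StrictlyFsResolvable F) : OneSingularFree G := by
  intro w h₁ h₂
  obtain ⟨E, hwE, hnwE, hE₁, hE₂⟩ := (hfac.uHit_right hU).exists_fsPair_of_ldeg_eq_one h₁ h₂
  obtain ⟨hwC, hnwC⟩ := hfac.notMem_of_mem_right hE₁ (mem_insert_self w E)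
  refine hU.insert_neg_notMem hns hnfs (E := C ∪ E) (x := w) (by simp [hwC, hwE]) (by simp [hnwC, hnwE])
    ?_ ?_
  · rw [← union_insert]
    exact hfac.union_mem hE₁
  · rw [← union_insert]
    exact hfac.union_mem hE₂

lemma oneSingularFree_left (hfac : IsClauseFactorisation F F₀ G C) (hU : UHit F)
    (hns : Nonsingular F) (hnfs : ¬ StrictlyFsResolvable F) (hG : 2 ≤ #G) :
    OneSingularFree F₀ := by
  intro w h₁ h₂
  by_cases hwG : |w| ∈ cvar G
  · obtain ⟨E, hwE, hnwE, hE₁, hE₂⟩ := (hfac.uHit_left hU).exists_fsPair_of_ldeg_eq_one h₁ h₂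
    have hne : ∀ {x}, |x| = |w| → ∀ {E'}, x ∈ E' → E' ≠ C := fun hx _ hxE hEC =>
      hfac.abs_notMem_cvar_right (hEC ▸ hxE) (hx ▸ hwG)
    exact hU.insert_neg_notMem hns hnfs hwE hnwE
      (hfac.mem_of_mem_left hE₁ (hne rfl (mem_insert_self _ _)))
      (hfac.mem_of_mem_left hE₂ (hne (abs_neg w) (mem_insert_self _ _)))
  · obtain ⟨E, hE, hwE⟩ := ldeg_pos_iff.1 (h₁ ▸ Nat.one_pos)
    have hw : |w| ∈ singularVars F₀ :=
      abs_mem_singularVars_iff.2 ⟨abs_mem_cvar hE hwE, by rw [h₁, h₂]; rfl⟩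
    obtain ⟨y, -, hy, hy₁, hy₂⟩ :=
      hfac.exists_ldeg_eq_one_of_mem_singularVars_left hU hns hG hw hwG
    rcases abs_eq_abs.1 hy with rfl | rfl
    · omega
    · rw [neg_neg] at hy₂
      omega

/-- Eliminating one literal of `C` of degree one makes all other literals of `C` occur at least
twice, so the remaining singular variables are shared with `G`. -/
lemma exists_reduct_left (hfac : IsClauseFactorisation F F₀ G C) (hU : UHit F)
    (hns : Nonsingular F) (hnfs : ¬ StrictlyFsResolvable F) (hG : 2 ≤ #G) :
    ∃ H, UHit H ∧ OneSingularFree H ∧ deficiency H = deficiency F₀ ∧ nvar F₀ ≤ nvar H + 1 ∧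
      singularVars H ⊆ cvar F₀ ∩ cvar G := by
  have hU₀ := hfac.uHit_left hU
  have h1s := hfac.oneSingularFree_left hU hns hnfs hG
  by_cases hsub : singularVars F₀ ⊆ cvar F₀ ∩ cvar G
  · exact ⟨F₀, hU₀, h1s, rfl, by omega, hsub⟩
  have hchar : ∀ u ∈ singularVars F₀, u ∉ cvar F₀ ∩ cvar G →
      ∃ y ∈ C, |y| = u ∧ ldeg F₀ y = 1 ∧ 2 ≤ ldeg F₀ (-y) := fun u hu huG =>
    hfac.exists_ldeg_eq_one_of_mem_singularVars_left hU hns hG hu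
      fun h => huG (mem_inter.2 ⟨(mem_singularVars.1 hu).1, h⟩)
  obtain ⟨w, hw, hwG⟩ := not_subset.1 hsub
  obtain ⟨y, hyC, rfl, hy₁, hy₂⟩ := hchar w hw hwG
  have hC := hfac.mem_left
  refine ⟨singularDP y C F₀, uHit_singularDP hU₀ hC hyC hy₁, h1s.singularDP hU₀ hC hyC hy₁ hy₂,
    hU₀.deficiency_singularDP hC hyC hy₁ (by omega),
    (hU₀.nvar_singularDP hC hyC (by omega)).ge, fun u hu => ?_⟩
  obtain ⟨huy, hu₀⟩ := mem_erase.1 (hU₀.singularVars_singularDP_subset hC hyC hy₁ hy₂ hu)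
  by_contra huG
  obtain ⟨z, hzC, rfl, -, hz₂⟩ := hchar u hu₀ huG
  exact hU₀.abs_notMem_singularVars_singularDP hC hyC hy₁ hy₂ hzC (fun h => huy (h ▸ rfl)) hz₂ hu

end IsClauseFactorisation

theorem stmt3_general (F F₀ G : Cls) (C : Finset ℤ)
    (hU : UHit F) (hns : Nonsingular F)
    (hC : C ∈ F₀) (hGu : ¬ Sat G)
    (hvdisj : Disjoint (C.image (fun x => |x|)) (cvar G))
    (hGnt : G ≠ {∅})
    (hdisj : (F₀ \ {C}) ∩ G.image (fun D => C ∪ D) = ∅)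
    (hF : F = (F₀ \ {C}) ∪ G.image (fun D => C ∪ D))
    (hnfs : ¬ StrictlyFsResolvable F)
    (N₀ N₁ : ℕ)
    (hN₀ : ∀ H : Cls, UHit H → Nonsingular H → deficiency H = deficiency F₀ → nvar H ≤ N₀)
    (hN₁ : ∀ H : Cls, UHit H → Nonsingular H → deficiency H = deficiency G → nvar H ≤ N₁) :
    nvar F ≤ N₀ + N₁ + (cvar F₀ ∩ cvar G).card + 1 := by
  have hfac : IsClauseFactorisation F F₀ G C := ⟨hC, hGu, hvdisj, hdisj, hF⟩
  have hUG := hfac.uHit_right hU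
  have hG : nvar G ≤ N₁ + #(cvar F₀ ∩ cvar G) := by
    obtain ⟨K, hK, hKns, hKd, hKn⟩ :=
      hUG.exists_nonsingular_of_oneSingularFree (hfac.oneSingularFree_right hU hns hnfs)
    have := hN₁ K hK hKns hKd
    have := card_le_card (hfac.singularVars_right_subset hns)
    omega
  have hF₀ : nvar F₀ ≤ N₀ + #(cvar F₀ ∩ cvar G) + 1 := by
    obtain ⟨H, hH, hH1, hHd, hHn, hHs⟩ := hfac.exists_reduct_left hU hns hnfs
      (two_le_card_of_not_sat hUG.1 hGu hGnt)
    obtain ⟨K, hK, hKns, hKd, hKn⟩ := hH.exists_nonsingular_of_oneSingularFree hH1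
    have := hN₀ K hK hKns (hKd.trans hHd)
    have := card_le_card hHs
    omega
  have hcard : nvar F + #(cvar F₀ ∩ cvar G) = nvar F₀ + nvar G := by
    rw [nvar, nvar, nvar, hfac.cvar_eq]
    exact card_union_add_card_inter _ _
  omega

/-- Bound on the number of variables of a nonsingular, not strictly fs-resolvable UHIT
admitting a nontrivial clause-factorisation. -/
theorem stmt3 (F F₀ G : Cls) (C : Finset ℤ)
    (hU : UHit F) (hns : Nonsingular F)
    (hF₀ : IsClauseSet F₀) (hG : IsClauseSet G)
    (hC : C ∈ F₀) (hGu : ¬ Sat G)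
    (hvdisj : Disjoint (C.image (fun x => |x|)) (cvar G))
    (hF₀nt : F₀ ≠ {∅}) (hGnt : G ≠ {∅})
    (hdisj : (F₀ \ {C}) ∩ G.image (fun D => C ∪ D) = ∅)
    (hF : F = (F₀ \ {C}) ∪ G.image (fun D => C ∪ D))
    (hnfs : ¬ StrictlyFsResolvable F)
    (N₀ N₁ : ℕ)
    (hN₀ : ∀ H : Cls, UHit H → Nonsingular H → deficiency H = deficiency F₀ → nvar H ≤ N₀)
    (hN₁ : ∀ H : Cls, UHit H → Nonsingular H → deficiency H = deficiency G → nvar H ≤ N₁) :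
    nvar F ≤ N₀ + N₁ + (cvar F₀ ∩ cvar G).card + 1 :=
  stmt3_general F F₀ G C hU hns hC hGu hvdisj hGnt hdisj hF hnfs N₀ N₁ hN₀ hN₁
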